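/- arXiv:2208.08371 — 2 statements merged into one kernel-verified Lean document; each statement's English description precedes it below -/
import Mathlib

section
/- Let k be a positive integer, let n ≥ 2k + 3, and let S be a set of at least two vertices of the cycle C_n satisfying: (1) every gap of S contains at most 2k + 1 vertices, and at most one gap of S contains exactly 2k + 1 vertices; (2) if a gap of S contains at least k + 1 vertices, then each of its neighboring gaps contains at most k vertices. Then S is a distance-k resolving set of C_n. -/
/-- The `k`-truncated distance: `d_k(x,y) = min{d(x,y), k+1}`. -/
noncomputable def SimpleGraph.distK {V : Type*} (G : SimpleGraph V) (k : ℕ) (x y : V) : ℕ :=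
  min (G.dist x y) (k + 1)

/-- `S` is a distance-`k` resolving set of `G`: every pair of distinct vertices is
resolved by some vertex of `S` with respect to the `k`-truncated distance. -/
def SimpleGraph.IsDistKResolvingSet {V : Type*} (G : SimpleGraph V) (k : ℕ) (S : Set V) : Prop :=
  ∀ x y : V, x ≠ y → ∃ z ∈ S, G.distK k x z ≠ G.distK k y z

/-- The distance-`k` metric dimension of `G`. -/
noncomputable def SimpleGraph.distKDim {V : Type*} (G : SimpleGraph V) (k : ℕ) : ℕ :=
  sInf {m : ℕ | ∃ S : Set V, S.ncard = m ∧ G.IsDistKResolvingSet k S}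

/-- `S` is a resolving set of `G`. -/
def SimpleGraph.IsResolvingSet {V : Type*} (G : SimpleGraph V) (S : Set V) : Prop :=
  ∀ x y : V, x ≠ y → ∃ z ∈ S, G.dist x z ≠ G.dist y z

/-- The metric dimension of `G`. -/
noncomputable def SimpleGraph.metricDim {V : Type*} (G : SimpleGraph V) : ℕ :=
  sInf {m : ℕ | ∃ S : Set V, S.ncard = m ∧ G.IsResolvingSet S}

/-- The cycle `C_n` with vertex set `ZMod n` (vertices `u_0, …, u_{n-1}` in cyclic
order), where consecutive vertices are adjacent. -/
def cycleG (n : ℕ) : SimpleGraph (ZMod n) :=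
  SimpleGraph.fromRel (fun x y => x - y = 1)

/-- The ordered pair `(a, b)` of distinct vertices of `S` determines a gap of `S`:
the arc running forward from `a` to `b` contains no vertex of `S` in its interior.
The internal vertices of this arc are `a + 1, …, a + ((b - a).val - 1)`. -/
def IsGap (n : ℕ) (S : Set (ZMod n)) (a b : ZMod n) : Prop :=
  a ∈ S ∧ b ∈ S ∧ a ≠ b ∧ ∀ i : ℕ, 0 < i → i < (b - a).val → a + (i : ZMod n) ∉ S

/-- The number of (internal) vertices in the gap of `S` determined by `(a, b)`. -/
def gapSize (n : ℕ) (a b : ZMod n) : ℕ := (b - a).val - 1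
section CycleDist
variable {n : ℕ}

lemma cycle_adj (hn : 2 ≤ n) (x : ZMod n) : (cycleG n).Adj x (x + 1) := by
  haveI : NeZero n := ⟨by omega⟩
  refine ⟨?_, Or.inr (by ring)⟩
  intro h
  have h1 : ((1 : ℕ) : ZMod n) = 0 := by
    have : x + 1 = x + 0 := by rw [add_zero]; exact h.symm
    have := add_left_cancel this
    exact_mod_cast this
  rw [ZMod.natCast_eq_zero_iff] at h1
  have := Nat.le_of_dvd one_pos h1
  omega

lemma gstep (hn : 2 ≤ n) (c : ZMod n) :
    min c.val (n - c.val) ≤ min (c+1).val (n - (c+1).val) + 1 ∧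
    min (c+1).val (n - (c+1).val) ≤ min c.val (n - c.val) + 1 := by
  haveI : NeZero n := ⟨by omega⟩
  haveI : Fact (1 < n) := ⟨by omega⟩
  have hc : c.val < n := ZMod.val_lt c
  have h1 : (c+1).val = (c.val + 1) % n := by
    rw [ZMod.val_add, ZMod.val_one]
  rcases Nat.lt_or_ge (c.val + 1) n with h | h
  · rw [Nat.mod_eq_of_lt h] at h1
    omega
  · have : c.val + 1 = n := by omega
    rw [this, Nat.mod_self] at h1
    omega


lemma cycle_walk_ge (hn : 2 ≤ n) : ∀ {x y : ZMod n} (p : (cycleG n).Walk x y),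
    min (y - x).val (n - (y - x).val) ≤ p.length := by
  haveI : NeZero n := ⟨by omega⟩
  intro x y p
  induction p with
  | nil => simp
  | @cons a b c hab p ih =>
    rw [SimpleGraph.Walk.length_cons]
    rcases hab.2 with h | h
    · have hcb : c - b = (c - a) + 1 := by linear_combination h
      have := (gstep hn (c - a)).1
      rw [← hcb] at this
      omega
    · have hca : c - a = (c - b) + 1 := by linear_combination h
      have := (gstep hn (c - b)).2
      rw [← hca] at this
      omega

lemma cycle_reach (hn : 2 ≤ n) (x : ZMod n) (c : ℕ) :
    ∃ p : (cycleG n).Walk x (x + (c : ZMod n)), p.length = c := by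
  induction c with
  | zero => exact ⟨SimpleGraph.Walk.nil.copy rfl (by simp), by simp⟩
  | succ c ih =>
    obtain ⟨p, hp⟩ := ih
    refine ⟨(p.concat (cycle_adj hn _)).copy rfl (by push_cast; ring), by simp [hp]⟩

lemma cycle_dist_cast (hn : 2 ≤ n) (x : ZMod n) {m : ℕ} (hm : m < n) :
    (cycleG n).dist x (x + (m : ZMod n)) = min m (n - m) := by
  haveI : NeZero n := ⟨by omega⟩
  obtain ⟨p, hp⟩ := cycle_reach hn x m
  obtain ⟨p', hp'⟩ := cycle_reach hn (x + (m : ZMod n)) (n - m)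
  have he : (x + (m : ZMod n)) + ((n - m : ℕ) : ZMod n) = x := by
    rw [Nat.cast_sub hm.le, ZMod.natCast_self]; ring
  have hub1 : (cycleG n).dist x (x + (m : ZMod n)) ≤ m := by
    have := SimpleGraph.dist_le p; omega
  have hub2 : (cycleG n).dist x (x + (m : ZMod n)) ≤ n - m := by
    have h2 := SimpleGraph.dist_le (p'.copy rfl he)
    rw [SimpleGraph.Walk.length_copy, hp'] at h2
    rwa [SimpleGraph.dist_comm] at h2
  have hreach : (cycleG n).Reachable x (x + (m : ZMod n)) := ⟨p⟩
  obtain ⟨p₀, hp₀⟩ := hreach.exists_walk_length_eq_dist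
  have hlb := cycle_walk_ge hn p₀
  rw [hp₀] at hlb
  have hv : ((x + (m : ZMod n)) - x) = (m : ZMod n) := by ring
  rw [hv, ZMod.val_cast_of_lt hm] at hlb
  omega

lemma cycle_dist (hn : 2 ≤ n) (x y : ZMod n) :
    (cycleG n).dist x y = min (y - x).val (n - (y - x).val) := by
  haveI : NeZero n := ⟨by omega⟩
  have h := cycle_dist_cast hn x (ZMod.val_lt (y - x))
  rwa [ZMod.natCast_rightInverse _, add_sub_cancel] at h

lemma cycle_dist_zero (hn : 2 ≤ n) {x y : ZMod n} (h : (cycleG n).dist x y = 0) :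
    x = y := by
  haveI : NeZero n := ⟨by omega⟩
  rw [cycle_dist hn] at h
  have hv : (y - x).val < n := ZMod.val_lt _
  have : (y - x).val = 0 := by omega
  have : y - x = 0 := (ZMod.val_eq_zero _).1 this
  linear_combination -this

end CycleDist
section FF
variable {n : ℕ}

lemma first_fwd (hn : 2 ≤ n) {S : Set (ZMod n)} (w : ZMod n) (hw : w ∉ S)
    {s : ZMod n} (hs : s ∈ S) :
    ∃ p : ℕ, 0 < p ∧ p ≤ (s - w).val ∧ w + (p : ZMod n) ∈ S ∧
      ∀ j : ℕ, 0 < j → j < p → w + (j : ZMod n) ∉ S := by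
  classical
  haveI : NeZero n := ⟨by omega⟩
  have hsw : s - w ≠ 0 := by
    intro h
    apply hw
    have hsw' : s = w := by linear_combination h
    rwa [hsw'] at hs
  have hv : 0 < (s - w).val :=
    Nat.pos_of_ne_zero (fun h => hsw ((ZMod.val_eq_zero _).1 h))
  have hwit : w + (((s - w).val : ℕ) : ZMod n) = s := by
    rw [ZMod.natCast_rightInverse _]; ring
  have hex : ∃ j : ℕ, 0 < j ∧ w + (j : ZMod n) ∈ S := ⟨(s - w).val, hv, by rw [hwit]; exact hs⟩
  refine ⟨Nat.find hex, (Nat.find_spec hex).1, ?_, (Nat.find_spec hex).2, ?_⟩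
  · exact Nat.find_min' hex ⟨hv, by rw [hwit]; exact hs⟩
  · intro j hj hjp hmem
    exact Nat.find_min hex hjp ⟨hj, hmem⟩

end FF
section KeyB
variable {n : ℕ}

lemma keyB {k : ℕ} (hk : 1 ≤ k) (hn : 2*k+3 ≤ n) {S : Set (ZMod n)} (hS : 2 ≤ S.ncard)
    (hgap : ∀ a b, IsGap n S a b → gapSize n a b ≤ 2 * k + 1)
    (w : ZMod n) (hw : w ∉ S) (hfar : ∀ z ∈ S, k < (cycleG n).dist w z) :
    ∃ b a : ZMod n, IsGap n S b a ∧ gapSize n b a = 2*k+1 ∧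
      w = b + ((k+1 : ℕ) : ZMod n) := by
  classical
  haveI : NeZero n := ⟨by omega⟩
  have hn2 : 2 ≤ n := by omega
  have hSne : S.Nonempty := Set.nonempty_of_ncard_ne_zero (by omega)
  obtain ⟨s₀, hs₀⟩ := hSne
  obtain ⟨p, hp0, hple, hpS, hpmin⟩ := first_fwd hn2 w hw hs₀
  have hpn : p < n := lt_of_le_of_lt hple (ZMod.val_lt _)
  have hw' : -w ∉ (fun v : ZMod n => -v) ⁻¹' S := by simpa using hw
  have hs₀' : -s₀ ∈ (fun v : ZMod n => -v) ⁻¹' S := by simpa using hs₀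
  obtain ⟨q, hq0, hqle, hqS, hqmin⟩ := first_fwd hn2 (-w) hw' hs₀'
  have hqle' : q ≤ (w - s₀).val := by
    have he : (-s₀ - -w) = w - s₀ := by ring
    rwa [he] at hqle
  have hqn : q < n := lt_of_le_of_lt hqle' (ZMod.val_lt _)
  have hqS' : w - (q : ZMod n) ∈ S := by
    have h := hqS
    simp only [Set.mem_preimage] at h
    have he : -(-w + (q : ZMod n)) = w - q := by ring
    rwa [he] at h
  have hqmin' : ∀ j : ℕ, 0 < j → j < q → w - (j : ZMod n) ∉ S := by
    intro j hj hjq hmem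
    apply hqmin j hj hjq
    simp only [Set.mem_preimage]
    have he : -(-w + (j : ZMod n)) = w - j := by ring
    rwa [he]
  -- distance bounds
  have hdp := cycle_dist_cast hn2 w hpn
  have hfp := hfar _ hpS
  rw [hdp] at hfp
  have hp1 : k + 1 ≤ p ∧ k + 1 ≤ n - p := by
    simp only [Nat.min_def] at hfp; split_ifs at hfp <;> omega
  have hbq : w - (q : ZMod n) = w + ((n - q : ℕ) : ZMod n) := by
    rw [Nat.cast_sub hqn.le, ZMod.natCast_self]; ring
  have hdq := cycle_dist_cast hn2 w (show n - q < n by omega)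
  have hfq := hfar _ hqS'
  rw [hbq, hdq] at hfq
  have hq1 : k + 1 ≤ q ∧ k + 1 ≤ n - q := by
    simp only [Nat.min_def] at hfq; split_ifs at hfq <;> omega
  -- p + q ≤ n
  have hpq : p ≤ n - q := by
    by_contra hlt
    push_neg at hlt
    exact hpmin (n - q) (by omega) hlt (hbq ▸ hqS')
  -- p + q < n
  have hpqn : p + q < n := by
    rcases Nat.lt_or_ge (p + q) n with h | h
    · exact h
    exfalso
    have hsub : S ⊆ {w + (p : ZMod n)} := by
      intro u hu
      set j := (u - w).val with hjd
      have hj : u = w + (j : ZMod n) := by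
        rw [hjd, ZMod.natCast_rightInverse _]; ring
      have hjn : j < n := ZMod.val_lt _
      rcases Nat.lt_trichotomy j p with hlt | heq | hgt
      · rcases Nat.eq_zero_or_pos j with h0 | h0
        · exfalso
          apply hw
          rw [h0] at hj; push_cast at hj; rw [add_zero] at hj
          rwa [← hj]
        · exact absurd hu (hj ▸ hpmin j h0 hlt)
      · rw [heq] at hj; simp [hj]
      · exfalso
        have h1 : 0 < n - j := by omega
        have h2 : n - j < q := by omega
        apply hqmin' (n - j) h1 h2
        have he : w - ((n - j : ℕ) : ZMod n) = w + (j : ZMod n) := by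
          rw [Nat.cast_sub hjn.le, ZMod.natCast_self]; ring
        rw [he, ← hj]; exact hu
    have hle1 := Set.ncard_le_ncard hsub (Set.finite_singleton _)
    rw [Set.ncard_singleton] at hle1
    omega
  -- the gap
  have hab : (w + (p : ZMod n)) - (w - (q : ZMod n)) = ((p + q : ℕ) : ZMod n) := by
    push_cast; ring
  have habv : ((w + (p : ZMod n)) - (w - (q : ZMod n))).val = p + q := by
    rw [hab, ZMod.val_cast_of_lt hpqn]
  have hne : w - (q : ZMod n) ≠ w + (p : ZMod n) := by
    intro h
    rw [h, sub_self, ZMod.val_zero] at habv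
    omega
  have hgapba : IsGap n S (w - (q : ZMod n)) (w + (p : ZMod n)) := by
    refine ⟨hqS', hpS, hne, ?_⟩
    intro i hi0 hilt hmem
    rw [habv] at hilt
    rcases Nat.lt_trichotomy i q with h | h | h
    · have he : (w - (q : ZMod n)) + (i : ZMod n) = w - ((q - i : ℕ) : ZMod n) := by
        rw [Nat.cast_sub h.le]; ring
      exact hqmin' (q - i) (by omega) (by omega) (he ▸ hmem)
    · have he : (w - (q : ZMod n)) + (i : ZMod n) = w := by rw [h]; ring
      exact hw (he ▸ hmem)
    · have he : (w - (q : ZMod n)) + (i : ZMod n) = w + ((i - q : ℕ) : ZMod n) := by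
        rw [Nat.cast_sub h.le]; ring
      exact hpmin (i - q) (by omega) (by omega) (he ▸ hmem)
  have hsz : gapSize n (w - (q : ZMod n)) (w + (p : ZMod n)) = p + q - 1 := by
    rw [gapSize, habv]
  have hle2 := hgap _ _ hgapba
  rw [hsz] at hle2
  have hqval : q = k + 1 := by omega
  refine ⟨w - (q : ZMod n), w + (p : ZMod n), hgapba, by rw [hsz]; omega, ?_⟩
  rw [hqval]
  push_cast
  ring

end KeyB
section CoreA
variable {n : ℕ}

lemma coreA {k : ℕ} (hk : 1 ≤ k) (hn : 2*k+3 ≤ n) {S : Set (ZMod n)} (hS : 2 ≤ S.ncard)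
    (hgap : ∀ a b, IsGap n S a b → gapSize n a b ≤ 2 * k + 1)
    (hnbr : ∀ a b c, IsGap n S a b → IsGap n S b c →
      (k + 1 ≤ gapSize n a b → gapSize n b c ≤ k) ∧
      (k + 1 ≤ gapSize n b c → gapSize n a b ≤ k))
    (z : ZMod n) (hz : z ∈ S) (t : ℕ) (ht1 : 1 ≤ t) (htk : t ≤ k)
    (x y : ZMod n) (hx : x = z + (t : ZMod n)) (hy : y = z - (t : ZMod n))
    (hminx : ∀ w ∈ S, t ≤ (cycleG n).dist x w)
    (hminy : ∀ w ∈ S, t ≤ (cycleG n).dist y w)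
    (heq : ∀ w ∈ S, (cycleG n).distK k x w = (cycleG n).distK k y w) : False := by
  classical
  haveI : NeZero n := ⟨by omega⟩
  have hn2 : 2 ≤ n := by omega
  have hxS : x ∉ S := by
    intro h
    have h1 := hminx x h
    rw [SimpleGraph.dist_self] at h1
    omega
  have hyS : y ∉ S := by
    intro h
    have h1 := hminy y h
    rw [SimpleGraph.dist_self] at h1
    omega
  -- vertices near z on the x side are not in S
  have hup : ∀ i : ℕ, 1 ≤ i → i ≤ t → z + (i : ZMod n) ∉ S := by
    intro i h1 h2 hmem
    rcases Nat.eq_or_lt_of_le h2 with he | hlt2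
    · apply hxS
      have hc : z + (i : ZMod n) = x := by rw [hx, he]
      rwa [← hc]
    · have hc : z + (i : ZMod n) = x + ((n - (t - i) : ℕ) : ZMod n) := by
        rw [hx, Nat.cast_sub (show t - i ≤ n by omega),
          Nat.cast_sub (show i ≤ t by omega), ZMod.natCast_self]
        ring
      have hd := cycle_dist_cast hn2 x (show n - (t - i) < n by omega)
      have h5 := hminx _ hmem
      rw [hc, hd] at h5
      simp only [Nat.min_def] at h5; split_ifs at h5 <;> omega
  have hdown : ∀ i : ℕ, 1 ≤ i → i ≤ t → z - (i : ZMod n) ∉ S := by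
    intro i h1 h2 hmem
    rcases Nat.eq_or_lt_of_le h2 with he | hlt2
    · apply hyS
      have hc : z - (i : ZMod n) = y := by rw [hy, he]
      rwa [← hc]
    · have hc : z - (i : ZMod n) = y + ((t - i : ℕ) : ZMod n) := by
        rw [hy, Nat.cast_sub (show i ≤ t by omega)]; ring
      have hd := cycle_dist_cast hn2 y (show t - i < n by omega)
      have h5 := hminy _ hmem
      rw [hc, hd] at h5
      simp only [Nat.min_def] at h5; split_ifs at h5 <;> omega
  -- first S-vertex forward from x
  have hzw : z = x + ((n - t : ℕ) : ZMod n) := by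
    rw [hx, Nat.cast_sub (show t ≤ n by omega), ZMod.natCast_self]; ring
  obtain ⟨p, hp0, hple, hpS, hpmin⟩ := first_fwd hn2 x hxS hz
  have hzx : (z - x).val = n - t := by
    have he : z - x = ((n - t : ℕ) : ZMod n) := by rw [hzw]; ring
    rw [he, ZMod.val_cast_of_lt (by omega)]
  rw [hzx] at hple
  -- first S-vertex backward from y
  have hyT : -y ∉ (fun v : ZMod n => -v) ⁻¹' S := by simpa using hyS
  have hzT : -z ∈ (fun v : ZMod n => -v) ⁻¹' S := by simpa using hz
  obtain ⟨q, hq0, hqle, hqS, hqmin⟩ := first_fwd hn2 (-y) hyT hzT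
  have hqle' : q ≤ n - t := by
    have he : -z - -y = ((n - t : ℕ) : ZMod n) := by
      rw [hy, Nat.cast_sub (show t ≤ n by omega), ZMod.natCast_self]; ring
    rw [he, ZMod.val_cast_of_lt (by omega)] at hqle
    exact hqle
  have hqS' : y - (q : ZMod n) ∈ S := by
    have h := hqS
    simp only [Set.mem_preimage] at h
    have he : -(-y + (q : ZMod n)) = y - q := by ring
    rwa [he] at h
  have hqmin' : ∀ j : ℕ, 0 < j → j < q → y - (j : ZMod n) ∉ S := by
    intro j hj hjq hmem
    apply hqmin j hj hjq
    simp only [Set.mem_preimage]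
    have he : -(-y + (j : ZMod n)) = y - j := by ring
    rwa [he]
  -- p < n - t
  have hplt : p < n - t := by
    rcases Nat.lt_or_ge p (n - t) with h | h
    · exact h
    exfalso
    have hpe : p = n - t := le_antisymm hple h
    have hsub : S ⊆ {z} := by
      intro u hu
      set j := (u - x).val with hjd
      have hj : u = x + (j : ZMod n) := by
        rw [hjd, ZMod.natCast_rightInverse _]; ring
      have hjn : j < n := ZMod.val_lt _
      rcases Nat.lt_trichotomy j p with hlt | heqj | hgt
      · rcases Nat.eq_zero_or_pos j with h0 | h0
        · exfalso
          apply hxS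
          rw [h0] at hj; push_cast at hj; rw [add_zero] at hj
          rwa [← hj]
        · exact absurd hu (hj ▸ hpmin j h0 hlt)
      · rw [heqj, hpe, ← hzw] at hj
        simp [hj]
      · exfalso
        have hc : x + (j : ZMod n) = z + ((j - (n - t) : ℕ) : ZMod n) := by
          rw [hzw, Nat.cast_sub (show n - t ≤ j by omega)]; ring
        exact hup (j - (n - t)) (by omega) (by omega) (by rw [← hc, ← hj]; exact hu)
    have hle1 := Set.ncard_le_ncard hsub (Set.finite_singleton _)
    rw [Set.ncard_singleton] at hle1
    omega
  -- q < n - t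
  have hqlt : q < n - t := by
    rcases Nat.lt_or_ge q (n - t) with h | h
    · exact h
    exfalso
    have hqe : q = n - t := le_antisymm hqle' h
    have hsub : S ⊆ {z} := by
      intro u hu
      set j := (y - u).val with hjd
      have hj : u = y - (j : ZMod n) := by
        rw [hjd, ZMod.natCast_rightInverse _]; ring
      have hjn : j < n := ZMod.val_lt _
      rcases Nat.lt_trichotomy j q with hlt | heqj | hgt
      · rcases Nat.eq_zero_or_pos j with h0 | h0
        · exfalso
          apply hyS
          rw [h0] at hj; push_cast at hj; rw [sub_zero] at hj
          rwa [← hj]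
        · exact absurd hu (hj ▸ hqmin' j h0 hlt)
      · have hu2 : u = z := by
          rw [hj, heqj, hqe, hy, Nat.cast_sub (show t ≤ n by omega), ZMod.natCast_self]
          ring
        simp [hu2]
      · exfalso
        have hc : y - (j : ZMod n) = z - ((t + j - n : ℕ) : ZMod n) := by
          rw [hy, Nat.cast_sub (show n ≤ t + j by omega), ZMod.natCast_self]
          push_cast
          ring
        exact hdown (t + j - n) (by omega) (by omega) (by rw [← hc, ← hj]; exact hu)
    have hle1 := Set.ncard_le_ncard hsub (Set.finite_singleton _)
    rw [Set.ncard_singleton] at hle1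
    omega
  -- the gap from z forward to x + p
  have haz : x + (p : ZMod n) - z = ((t + p : ℕ) : ZMod n) := by
    rw [hx]; push_cast; ring
  have hazv : (x + (p : ZMod n) - z).val = t + p := by
    rw [haz, ZMod.val_cast_of_lt (by omega)]
  have hne1 : z ≠ x + (p : ZMod n) := by
    intro h
    rw [← h, sub_self, ZMod.val_zero] at hazv
    omega
  have hgap1 : IsGap n S z (x + (p : ZMod n)) := by
    refine ⟨hz, hpS, hne1, ?_⟩
    intro i hi0 hilt hmem
    rw [hazv] at hilt
    rcases le_or_gt i t with h | h
    · exact hup i hi0 h hmem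
    · have hc : z + (i : ZMod n) = x + ((i - t : ℕ) : ZMod n) := by
        rw [hx, Nat.cast_sub h.le]; ring
      exact hpmin (i - t) (by omega) (by omega) (hc ▸ hmem)
  -- the gap from y - q forward to z
  have hbz : z - (y - (q : ZMod n)) = ((t + q : ℕ) : ZMod n) := by
    rw [hy]; push_cast; ring
  have hbzv : (z - (y - (q : ZMod n))).val = t + q := by
    rw [hbz, ZMod.val_cast_of_lt (by omega)]
  have hne2 : y - (q : ZMod n) ≠ z := by
    intro h
    rw [h, sub_self, ZMod.val_zero] at hbzv
    omega
  have hgap2 : IsGap n S (y - (q : ZMod n)) z := by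
    refine ⟨hqS', hz, hne2, ?_⟩
    intro i hi0 hilt hmem
    rw [hbzv] at hilt
    rcases Nat.lt_trichotomy i q with h | h | h
    · have hc : (y - (q : ZMod n)) + (i : ZMod n) = y - ((q - i : ℕ) : ZMod n) := by
        rw [Nat.cast_sub h.le]; ring
      exact hqmin' (q - i) (by omega) (by omega) (hc ▸ hmem)
    · have hc : (y - (q : ZMod n)) + (i : ZMod n) = y := by rw [h]; ring
      exact hyS (hc ▸ hmem)
    · have hc : (y - (q : ZMod n)) + (i : ZMod n) = z - ((t - (i - q) : ℕ) : ZMod n) := by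
        have e1 : ((t - (i - q) : ℕ) : ZMod n) = (t : ZMod n) - ((i - q : ℕ) : ZMod n) :=
          Nat.cast_sub (by omega)
        have e2 : ((i - q : ℕ) : ZMod n) = (i : ZMod n) - (q : ZMod n) :=
          Nat.cast_sub (by omega)
        rw [hy, e1, e2]; ring
      exact hdown (t - (i - q)) (by omega) (by omega) (hc ▸ hmem)
  have hsz1 : gapSize n z (x + (p : ZMod n)) = t + p - 1 := by rw [gapSize, hazv]
  have hsz2 : gapSize n (y - (q : ZMod n)) z = t + q - 1 := by rw [gapSize, hbzv]
  by_cases hcase : t + p - 1 ≤ k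
  · -- forward gap small: resolve with a = x + p
    have hpk : t + p ≤ k + 1 := by omega
    have hda := cycle_dist_cast hn2 x (show p < n by omega)
    have h1 : (cycleG n).dist x (x + (p : ZMod n)) = p := by
      rw [hda, Nat.min_eq_left (by omega)]
    have heqa := heq _ hpS
    rw [SimpleGraph.distK, SimpleGraph.distK, h1] at heqa
    have hya : x + (p : ZMod n) = y + ((2*t + p : ℕ) : ZMod n) := by
      rw [hx, hy]; push_cast; ring
    have hd2 := cycle_dist_cast hn2 y (show 2*t + p < n by omega)
    rw [hya, hd2] at heqa
    simp only [Nat.min_def] at heqa; split_ifs at heqa <;> omega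
  · -- forward gap big, so backward gap small: resolve with b = y - q
    have hqk : t + q - 1 ≤ k := by
      have h2 := (hnbr _ _ _ hgap2 hgap1).2
      rw [hsz1, hsz2] at h2
      exact h2 (by omega)
    have hqk' : t + q ≤ k + 1 := by omega
    have hc1 : y - (q : ZMod n) = y + ((n - q : ℕ) : ZMod n) := by
      rw [Nat.cast_sub (by omega), ZMod.natCast_self]; ring
    have hd1 := cycle_dist_cast hn2 y (show n - q < n by omega)
    have h1 : (cycleG n).dist y (y - (q : ZMod n)) = q := by
      rw [hc1, hd1]
      have he : n - (n - q) = q := by omega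
      rw [he, Nat.min_eq_right (by omega)]
    have heqb := heq _ hqS'
    rw [SimpleGraph.distK, SimpleGraph.distK, h1] at heqb
    have hc2 : y - (q : ZMod n) = x + ((n - (2*t + q) : ℕ) : ZMod n) := by
      rw [hx, hy, Nat.cast_sub (show 2*t + q ≤ n by omega), ZMod.natCast_self]
      push_cast; ring
    have hd2 := cycle_dist_cast hn2 x (show n - (2*t + q) < n by omega)
    rw [hc2, hd2] at heqb
    have hnn : n - (n - (2*t + q)) = 2*t + q := by omega
    rw [hnn] at heqb
    simp only [Nat.min_def] at heqb; split_ifs at heqb <;> omega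

end CoreA

/-- the gap conditions guarantee a distance-k resolving set of `C_n`,
`n ≥ 2k + 3`. -/
theorem stmt_7 (k : ℕ) (hk : 1 ≤ k) (n : ℕ) (hn : 2 * k + 3 ≤ n)
    (S : Set (ZMod n)) (hS : 2 ≤ S.ncard)
    (hgap : ∀ a b, IsGap n S a b → gapSize n a b ≤ 2 * k + 1)
    (hgap' : ∀ a b c d, IsGap n S a b → IsGap n S c d →
      gapSize n a b = 2 * k + 1 → gapSize n c d = 2 * k + 1 → a = c ∧ b = d)
    (hnbr : ∀ a b c, IsGap n S a b → IsGap n S b c →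
      (k + 1 ≤ gapSize n a b → gapSize n b c ≤ k) ∧
      (k + 1 ≤ gapSize n b c → gapSize n a b ≤ k)) :
    (cycleG n).IsDistKResolvingSet k S := by
  classical
  haveI : NeZero n := ⟨by omega⟩
  have hn2 : 2 ≤ n := by omega
  intro x y hxy
  by_contra hcon
  push_neg at hcon
  have hxS : x ∉ S := by
    intro hx
    have h0 := hcon x hx
    rw [SimpleGraph.distK, SimpleGraph.distK, SimpleGraph.dist_self] at h0
    have hd0 : (cycleG n).dist y x = 0 := by
      simp only [Nat.min_def] at h0; split_ifs at h0 <;> omega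
    exact hxy (cycle_dist_zero hn2 hd0).symm
  have hyS : y ∉ S := by
    intro hy
    have h0 := hcon y hy
    rw [SimpleGraph.distK, SimpleGraph.distK, SimpleGraph.dist_self] at h0
    have hd0 : (cycleG n).dist x y = 0 := by
      simp only [Nat.min_def] at h0; split_ifs at h0 <;> omega
    exact hxy (cycle_dist_zero hn2 hd0)
  by_cases hA : ∃ z ∈ S, (cycleG n).dist x z ≤ k
  · -- some S-vertex is within distance k of x
    have hex : ∃ m : ℕ, ∃ z ∈ S, (cycleG n).dist x z = m := by
      obtain ⟨z0, hz0, _⟩ := hA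
      exact ⟨_, z0, hz0, rfl⟩
    set t := Nat.find hex with htd
    obtain ⟨z, hz, hdzx⟩ := Nat.find_spec hex
    rw [← htd] at hdzx
    have htk : t ≤ k := by
      obtain ⟨z0, hz0, hz0k⟩ := hA
      exact le_trans (Nat.find_min' hex ⟨z0, hz0, rfl⟩) hz0k
    have hminx : ∀ w ∈ S, t ≤ (cycleG n).dist x w := by
      intro w hw
      by_contra hlt
      push_neg at hlt
      exact Nat.find_min hex hlt ⟨w, hw, rfl⟩
    have ht1 : 1 ≤ t := by
      rcases Nat.eq_zero_or_pos t with h0 | h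
      · exfalso
        apply hxS
        rw [h0] at hdzx
        rw [cycle_dist_zero hn2 hdzx]
        exact hz
      · exact h
    have hdzy : (cycleG n).dist y z = t := by
      have h0 := hcon z hz
      rw [SimpleGraph.distK, SimpleGraph.distK, hdzx] at h0
      simp only [Nat.min_def] at h0; split_ifs at h0 <;> omega
    have hminy : ∀ w ∈ S, t ≤ (cycleG n).dist y w := by
      intro w hw
      have h0 := hcon w hw
      have h1 := hminx w hw
      rw [SimpleGraph.distK, SimpleGraph.distK] at h0
      simp only [Nat.min_def] at h0; split_ifs at h0 <;> omega
    have hori : ∀ u : ZMod n, (cycleG n).dist u z = t →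
        u = z - (t : ZMod n) ∨ u = z + (t : ZMod n) := by
      intro u hd
      rw [cycle_dist hn2] at hd
      have hvlt : (z - u).val < n := ZMod.val_lt _
      have hv2 : (z - u).val = t ∨ (z - u).val = n - t := by
        simp only [Nat.min_def] at hd; split_ifs at hd <;> omega
      rcases hv2 with h | h
      · left
        have he : z - u = (t : ZMod n) := by
          rw [← h, ZMod.natCast_rightInverse _]
        linear_combination -he
      · right
        have he : z - u = ((n - t : ℕ) : ZMod n) := by
          rw [← h, ZMod.natCast_rightInverse _]
        rw [Nat.cast_sub (by omega), ZMod.natCast_self] at he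
        linear_combination -he
    rcases hori x hdzx with hx1 | hx1 <;> rcases hori y hdzy with hy1 | hy1
    · exact hxy (hx1.trans hy1.symm)
    · exact coreA hk hn hS hgap hnbr z hz t ht1 htk y x hy1 hx1 hminy hminx
        (fun w hw => (hcon w hw).symm)
    · exact coreA hk hn hS hgap hnbr z hz t ht1 htk x y hx1 hy1 hminx hminy hcon
    · exact hxy (hx1.trans hy1.symm)
  · -- every S-vertex is at distance > k from x (hence from y)
    push_neg at hA
    have hAy : ∀ z ∈ S, k < (cycleG n).dist y z := by
      intro z hz
      have h0 := hcon z hz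
      have h1 := hA z hz
      rw [SimpleGraph.distK, SimpleGraph.distK] at h0
      simp only [Nat.min_def] at h0; split_ifs at h0 <;> omega
    obtain ⟨bx, ax, hgx, hsx, hwx⟩ := keyB hk hn hS hgap x hxS hA
    obtain ⟨by', ay, hgy, hsy, hwy⟩ := keyB hk hn hS hgap y hyS hAy
    obtain ⟨hbb, -⟩ := hgap' bx ax by' ay hgx hgy hsx hsy
    apply hxy
    rw [hwx, hwy, hbb]
end

section
/- Let α ≥ 4 and let G be the tree obtained from the path v_1 v_2 … v_α by attaching exactly two leaves ℓ_i and ℓ'_i to v_i for each i ∈ {1, …, α}. Then dim_1(G) ≥ 2α − 1. -/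
/-- Vertices of the caterpillar tree obtained from the path `v_1 v_2 … v_α` by attaching
two leaves `ℓ_i, ℓ'_i` to each `v_i` (`v_{i+1} = v i`, `ℓ_{i+1} = leaf i`,
`ℓ'_{i+1} = leaf' i` for `i : Fin α`). -/
inductive CatV (α : ℕ) : Type where
  | v : Fin α → CatV α
  | leaf : Fin α → CatV α
  | leaf' : Fin α → CatV α

/-- Edges: `v_i v_{i+1}`, `v_i ℓ_i`, `v_i ℓ'_i`. -/
def catAdj (α : ℕ) : CatV α → CatV α → Prop
  | .v i, .v j => j.val = i.val + 1
  | .v i, .leaf j => i = j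
  | .v i, .leaf' j => i = j
  | _, _ => False

def catG (α : ℕ) : SimpleGraph (CatV α) := SimpleGraph.fromRel (catAdj α)

/-!
For the truncated distance `d_1`, a vertex `z ∉ {x, y}` separates `x` and `y` only if it is
adjacent to exactly one of them. Hence a distance-1 resolving set `S` contains one of the twin
leaves `ℓ_i, ℓ'_i` for every `i`, and if leaves at `v_i` and at `v_j` (`i ≠ j`) both lie outside
`S`, then `v_i ∈ S` or `v_j ∈ S`. So at most one column `{v_i, ℓ_i, ℓ'_i}` is *deficient* (misses
`v_i` and a leaf): every other column meets `S` in at least two vertices, and the deficient one in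
at least one, whence `|S| ≥ 2α - 1`.
-/

namespace SimpleGraph

variable {V : Type*} {G : SimpleGraph V} {k : ℕ} {x y z : V} {S : Set V}

lemma distK_self (k : ℕ) (x : V) : G.distK k x x = 0 := by
  simp [distK]

lemma Reachable.distK_pos (h : G.Reachable x y) (hne : x ≠ y) : 0 < G.distK k x y :=
  lt_min (h.pos_dist_of_ne hne) k.succ_pos

lemma distK_of_adj (h : G.Adj x y) : G.distK k x y = 1 := by
  simp [distK, dist_eq_one_iff_adj.mpr h]

lemma Reachable.distK_one_of_not_adj (h : G.Reachable x y) (hne : x ≠ y) (hxy : ¬G.Adj x y) :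
    G.distK 1 x y = 2 := by
  have hpos := h.pos_dist_of_ne hne
  have hne1 : G.dist x y ≠ 1 := fun h1 => hxy (dist_eq_one_iff_adj.mp h1)
  simp only [distK]
  omega

lemma Preconnected.distK_one_eq_of_adj_iff (hG : G.Preconnected) (hx : x ≠ z) (hy : y ≠ z)
    (h : G.Adj x z ↔ G.Adj y z) : G.distK 1 x z = G.distK 1 y z := by
  by_cases hxz : G.Adj x z
  · rw [distK_of_adj hxz, distK_of_adj (h.mp hxz)]
  · rw [(hG x z).distK_one_of_not_adj hx hxz, (hG y z).distK_one_of_not_adj hy (mt h.mpr hxz)]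

lemma IsDistKResolvingSet.exists_mem_not_adj_iff (hS : G.IsDistKResolvingSet 1 S)
    (hG : G.Preconnected) (hxy : x ≠ y) (hx : x ∉ S) (hy : y ∉ S) :
    ∃ z ∈ S, ¬(G.Adj x z ↔ G.Adj y z) := by
  obtain ⟨z, hzS, hz⟩ := hS x y hxy
  refine ⟨z, hzS, fun h => hz (hG.distK_one_eq_of_adj_iff ?_ ?_ h)⟩
  · rintro rfl; exact hx hzS
  · rintro rfl; exact hy hzS

lemma isDistKResolvingSet_univ (hG : G.Preconnected) : G.IsDistKResolvingSet k Set.univ :=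
  fun x y hxy => ⟨x, trivial, by rw [distK_self]; exact ((hG y x).distK_pos hxy.symm).ne⟩

lemma le_distKDim {m : ℕ} (hG : G.Preconnected)
    (h : ∀ S, G.IsDistKResolvingSet k S → m ≤ S.ncard) : m ≤ G.distKDim k :=
  le_csInf ⟨_, _, rfl, isDistKResolvingSet_univ hG⟩ fun _ ⟨S, hS, hres⟩ => hS ▸ h S hres

end SimpleGraph

namespace CatV

open SimpleGraph Finset

variable {α : ℕ}

deriving instance DecidableEq, Fintype for CatV

def idx : CatV α → Fin α
  | v i => i
  | leaf i => i
  | leaf' i => i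

def pathHom (α : ℕ) : pathGraph α →g catG α where
  toFun := v
  map_rel' h := by
    simp only [pathGraph_adj, catG, fromRel_adj, catAdj, ne_eq, v.injEq, Fin.ext_iff] at h ⊢
    omega

lemma catG_adj_leaf {i : Fin α} {z : CatV α} : (catG α).Adj (leaf i) z ↔ z = v i := by
  cases z <;> simp [catG, catAdj, eq_comm]

lemma catG_adj_leaf' {i : Fin α} {z : CatV α} : (catG α).Adj (leaf' i) z ↔ z = v i := by
  cases z <;> simp [catG, catAdj, eq_comm]

lemma catG_reachable_v (x : CatV α) : (catG α).Reachable x (v (idx x)) := by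
  cases x with
  | v i => rfl
  | leaf i => exact (catG_adj_leaf.mpr rfl).reachable
  | leaf' i => exact (catG_adj_leaf'.mpr rfl).reachable

lemma catG_preconnected : (catG α).Preconnected := fun x y =>
  ((catG_reachable_v x).trans ((pathGraph_preconnected α _ _).map (pathHom α))).trans
    (catG_reachable_v y).symm

def Deficient (s : Finset (CatV α)) (i : Fin α) : Prop :=
  v i ∉ s ∧ (leaf i ∉ s ∨ leaf' i ∉ s)

instance (s : Finset (CatV α)) : DecidablePred (Deficient s) :=
  fun _ => inferInstanceAs (Decidable (_ ∧ _))

variable {s : Finset (CatV α)}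

lemma leaf_mem_or_leaf'_mem (hs : (catG α).IsDistKResolvingSet 1 s) (i : Fin α) :
    leaf i ∈ s ∨ leaf' i ∈ s := by
  by_contra! h
  obtain ⟨z, -, hz⟩ := hs.exists_mem_not_adj_iff catG_preconnected (by simp) h.1 h.2
  exact hz (by rw [catG_adj_leaf, catG_adj_leaf'])

lemma exists_leaf_not_mem {i : Fin α} (h : leaf i ∉ s ∨ leaf' i ∉ s) :
    ∃ x ∉ s, idx x = i ∧ ∀ z, (catG α).Adj x z ↔ z = v i := by
  rcases h with h | h
  · exact ⟨leaf i, h, rfl, fun _ => catG_adj_leaf⟩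
  · exact ⟨leaf' i, h, rfl, fun _ => catG_adj_leaf'⟩

/-- Two leaves outside `s`, in different columns, are adjacent only to their own spine vertices,
so one of those must lie in `s`. -/
lemma eq_of_deficient (hs : (catG α).IsDistKResolvingSet 1 s) {i j : Fin α}
    (hi : Deficient s i) (hj : Deficient s j) : i = j := by
  by_contra hij
  obtain ⟨x, hxs, rfl, hx⟩ := exists_leaf_not_mem hi.2
  obtain ⟨y, hys, rfl, hy⟩ := exists_leaf_not_mem hj.2
  obtain ⟨z, hzs, hz⟩ :=
    hs.exists_mem_not_adj_iff catG_preconnected (fun h => hij (congrArg idx h)) hxs hys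
  rw [hx, hy] at hz
  have hzx : z ≠ v (idx x) := fun h => hi.1 (h ▸ hzs)
  have hzy : z ≠ v (idx y) := fun h => hj.1 (h ▸ hzs)
  tauto

lemma card_deficient_le_one (hs : (catG α).IsDistKResolvingSet 1 s) :
    #{i | Deficient s i} ≤ 1 :=
  card_le_one.mpr fun _ hi _ hj =>
    eq_of_deficient hs (mem_filter.mp hi).2 (mem_filter.mp hj).2

lemma two_le_card_column_add (hs : (catG α).IsDistKResolvingSet 1 s) (i : Fin α) :
    2 ≤ #{x ∈ s | idx x = i} + if Deficient s i then 1 else 0 := by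
  have hleaf := leaf_mem_or_leaf'_mem hs i
  split_ifs with hi
  · suffices 0 < #{x ∈ s | idx x = i} by omega
    rcases hleaf with h | h <;> exact card_pos.mpr ⟨_, mem_filter.mpr ⟨h, rfl⟩⟩
  · have hi' : v i ∈ s ∨ (leaf i ∈ s ∧ leaf' i ∈ s) := by unfold Deficient at hi; tauto
    refine one_lt_card.mpr ?_
    have mem {x : CatV α} (hx : x ∈ s) (hxi : idx x = i) : x ∈ {x ∈ s | idx x = i} :=
      mem_filter.mpr ⟨hx, hxi⟩
    rcases hi' with hv | ⟨h, h'⟩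
    · rcases hleaf with h | h
      · exact ⟨v i, mem hv rfl, leaf i, mem h rfl, nofun⟩
      · exact ⟨v i, mem hv rfl, leaf' i, mem h rfl, nofun⟩
    · exact ⟨leaf i, mem h rfl, leaf' i, mem h' rfl, nofun⟩

lemma two_mul_sub_one_le_card (hs : (catG α).IsDistKResolvingSet 1 s) : 2 * α - 1 ≤ #s := by
  have hsum : 2 * α ≤ #s + #{i | Deficient s i} :=
    calc 2 * α = ∑ _i : Fin α, 2 := by simp [mul_comm]
      _ ≤ ∑ i, (#{x ∈ s | idx x = i} + if Deficient s i then 1 else 0) :=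
        sum_le_sum fun i _ => two_le_card_column_add hs i
      _ = #s + #{i | Deficient s i} := by
        rw [sum_add_distrib, sum_boole, Nat.cast_id,
          ← card_eq_sum_card_fiberwise fun _ _ => mem_univ _]
  have := card_deficient_le_one hs
  omega

end CatV

theorem stmt_14_general (α : ℕ) : 2 * α - 1 ≤ (catG α).distKDim 1 :=
  SimpleGraph.le_distKDim CatV.catG_preconnected fun S hS => by
    have hfin := S.toFinite
    rw [Set.ncard_eq_toFinset_card S hfin]
    exact CatV.two_mul_sub_one_le_card (hfin.coe_toFinset.symm ▸ hS)

/-- for the caterpillar obtained from the path `v_1 … v_α` (`α ≥ 4`) by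
attaching two leaves to each `v_i`, `dim_1(G) ≥ 2α - 1`. -/
theorem stmt_14 (α : ℕ) (hα : 4 ≤ α) : 2 * α - 1 ≤ (catG α).distKDim 1 :=
  stmt_14_general α
end
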